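/- Let an admissible aggregation of the hourly data be given, and assume the core model attains its minimum. Then the aggregated model also attains its minimum, the optimal values of the two problems are equal, and lifting an optimal solution of the aggregated model (setting x_{g,h} := x̄_{g,Γ(h)}, r_h := r̄_{Γ(h)}, and, for the i-th hour of a block of state σ, s_h := s̄_{π(σ)} + i·r̄_σ) yields an optimal solution of the core model. In other words, under these conditions the temporal aggregation is lossless: the aggregated model is equivalent to the non-aggregated hourly model. -/

import Mathlib

/-!
Lifting an aggregated point and averaging an hourly point are maps between the two feasible sets
that preserve the objective, so the two problems have the same optimal value and both maps send
optimal points to optimal points. Averaging takes fiber means of `x` and `r` and, for the storage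
level of a state `σ`, the mean of `s` over the last hours of the blocks of `σ`. Since
`prev` is onto, hence a permutation of the states, shifting back by `q σ` is a bijection from the
block ends of `σ` onto those of `prev σ`; telescoping `s h = s (h - 1) + r h` over each block then
gives the aggregated storage equation. A lifted point is feasible because inside a block its
storage level moves linearly between `s̄ (prev σ)` and `s̄ σ`.
-/

/-- A point of the core (hourly) planning LP: generation `x`, generator
capacities `z`, storage power capacity `t`, storage energy capacity `u`,
net charge `r`, and storage levels `s`. -/
structure CorePoint (m n : ℕ) where
  x : Fin m → Fin n → ℝ
  z : Fin m → ℝ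
  t : ℝ
  u : ℝ
  r : Fin n → ℝ
  s : Fin n → ℝ

/-- Feasibility for the core model (hours cyclic, indices mod `n`). -/
def CoreFeasible {m n : ℕ} [NeZero n] (d : Fin n → ℝ) (a : Fin m → Fin n → ℝ)
    (p : CorePoint m n) : Prop :=
  (∀ g h, 0 ≤ p.x g h) ∧ (∀ g, 0 ≤ p.z g) ∧ 0 ≤ p.t ∧ 0 ≤ p.u ∧ (∀ h, 0 ≤ p.s h) ∧
  (∀ h, (∑ g, p.x g h) + p.r h = d h) ∧
  (∀ g h, p.x g h ≤ a g h * p.z g) ∧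
  (∀ h, p.s h = p.s (h - 1) + p.r h) ∧
  (∀ h, |p.r h| ≤ p.t) ∧
  (∀ h, p.s h ≤ p.u)

/-- Objective of the core model. -/
def CoreObj {m n : ℕ} (cx cz : Fin m → ℝ) (ct cu : ℝ) (p : CorePoint m n) : ℝ :=
  (∑ g, ∑ h, cx g * p.x g h) + (∑ g, cz g * p.z g) + ct * p.t + cu * p.u

/-- A point of the aggregated planning LP, with variables indexed by
states `Fin S` instead of hours. -/
structure AggPoint (m S : ℕ) where
  x : Fin m → Fin S → ℝ
  z : Fin m → ℝ
  t : ℝ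
  u : ℝ
  r : Fin S → ℝ
  s : Fin S → ℝ

/-- An admissible aggregation of the hourly data: a surjection `Γ` from
hours to states such that demand `d` and availability `a` depend only on
the state; the cyclic hour sequence decomposes into maximal runs
("blocks") of consecutive hours with constant state, every block of state
`σ` has the same length `q σ ≥ 1`, and every block of state `σ` is
immediately preceded by a block of state `prev σ` (each state has a unique
incoming connection; uniqueness of the outgoing connection follows).  The
block structure is encoded by `idx h`, the (1-based) position of hour `h`
within its block. -/
structure AdmissibleAgg (m n S : ℕ) [NeZero n] (d : Fin n → ℝ)
    (a : Fin m → Fin n → ℝ) where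
  Γ : Fin n → Fin S
  q : Fin S → ℕ
  prev : Fin S → Fin S
  idx : Fin n → ℕ
  surj : Function.Surjective Γ
  d_compat : ∀ h h', Γ h = Γ h' → d h = d h'
  a_compat : ∀ g h h', Γ h = Γ h' → a g h = a g h'
  q_pos : ∀ σ, 1 ≤ q σ
  idx_one_le : ∀ h, 1 ≤ idx h
  idx_le : ∀ h, idx h ≤ q (Γ h)
  idx_step : ∀ h, idx h < q (Γ h) → idx (h + 1) = idx h + 1 ∧ Γ (h + 1) = Γ h
  idx_end : ∀ h, idx h = q (Γ h) → idx (h + 1) = 1 ∧ Γ (h + 1) ≠ Γ h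
  pred_block : ∀ h, idx h = 1 → Γ (h - 1) = prev (Γ h)

/-- The weight of a state: the number of hours mapped to it. -/
def weight {n S : ℕ} (Γ : Fin n → Fin S) (σ : Fin S) : ℕ :=
  (Finset.univ.filter fun h => Γ h = σ).card

/-- Feasibility for the aggregated model (the aggregated demand `d σ` and
availability `a g σ` are the common values of `d h` and `a g h` over the
fiber `Γ⁻¹ σ`, expressed here fiberwise). -/
def AggFeasible {m n S : ℕ} [NeZero n] {d : Fin n → ℝ} {a : Fin m → Fin n → ℝ}
    (A : AdmissibleAgg m n S d a) (p : AggPoint m S) : Prop :=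
  (∀ g σ, 0 ≤ p.x g σ) ∧ (∀ g, 0 ≤ p.z g) ∧ 0 ≤ p.t ∧ 0 ≤ p.u ∧ (∀ σ, 0 ≤ p.s σ) ∧
  (∀ h, (∑ g, p.x g (A.Γ h)) + p.r (A.Γ h) = d h) ∧
  (∀ g h, p.x g (A.Γ h) ≤ a g h * p.z g) ∧
  (∀ σ, p.s σ = p.s (A.prev σ) + (A.q σ : ℝ) * p.r σ) ∧
  (∀ σ, |p.r σ| ≤ p.t) ∧
  (∀ σ, p.s σ ≤ p.u)

/-- Objective of the aggregated model, with weights `w σ = |Γ⁻¹ σ|`. -/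
def AggObj {m n S : ℕ} (Γ : Fin n → Fin S) (cx cz : Fin m → ℝ) (ct cu : ℝ)
    (p : AggPoint m S) : ℝ :=
  (∑ g, ∑ σ, (weight Γ σ : ℝ) * cx g * p.x g σ) + (∑ g, cz g * p.z g)
    + ct * p.t + cu * p.u

/-- The lifted hourly point of an aggregated point: `x g h := x̄ g (Γ h)`,
`r h := r̄ (Γ h)`, `z, t, u` unchanged, and for the `i`-th hour of a block
of state `σ`, `s h := s̄ (prev σ) + i * r̄ σ`. -/
def liftPoint {m n S : ℕ} [NeZero n] {d : Fin n → ℝ} {a : Fin m → Fin n → ℝ}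
    (A : AdmissibleAgg m n S d a) (p : AggPoint m S) : CorePoint m n where
  x := fun g h => p.x g (A.Γ h)
  z := p.z
  t := p.t
  u := p.u
  r := fun h => p.r (A.Γ h)
  s := fun h => p.s (A.prev (A.Γ h)) + (A.idx h : ℝ) * p.r (A.Γ h)

open Finset
open scoped BigOperators Fin.NatCast Fin.CommRing

theorem Fin.sum_range_eq_sub_of_forall_eq_add {n : ℕ} [NeZero n] {M : Type*} [AddCommGroup M]
    {s r : Fin n → M} (hs : ∀ h, s h = s (h - 1) + r h) (e : Fin n) (k : ℕ) :
    ∑ j ∈ range k, r (e - j) = s e - s (e - k) := by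
  have step : ∀ j : ℕ, r (e - j) = -s (e - (j + 1 : ℕ)) - -s (e - j) := fun j => by
    rw [hs (e - j), Nat.cast_succ, sub_add_eq_sub_sub]; abel
  rw [sum_congr rfl fun j _ => step j, sum_range_sub (fun j : ℕ => -s (e - j)), Nat.cast_zero,
    sub_zero, neg_sub_neg]

theorem add_mul_mem_Icc_of_mem_Icc {x r lo hi i q : ℝ} (hx : x ∈ Set.Icc lo hi)
    (hxq : x + q * r ∈ Set.Icc lo hi) (hi0 : 0 ≤ i) (hiq : i ≤ q) :
    x + i * r ∈ Set.Icc lo hi := by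
  obtain ⟨h1, h2⟩ := hx
  obtain ⟨h3, h4⟩ := hxq
  rcases le_total 0 r with hr | hr <;> constructor <;> nlinarith

theorem sum_weight_smul {n S : ℕ} {M : Type*} [AddCommMonoid M] (Γ : Fin n → Fin S)
    (f : Fin S → M) : ∑ σ, weight Γ σ • f σ = ∑ h, f (Γ h) := by
  simp only [weight, ← sum_const]
  exact sum_fiberwise' univ Γ f

namespace AdmissibleAgg

variable {m n S : ℕ} [NeZero n] {d : Fin n → ℝ} {a : Fin m → Fin n → ℝ}
  (A : AdmissibleAgg m n S d a)

def fiber (σ : Fin S) : Finset (Fin n) := {h | A.Γ h = σ}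

def blockEnds (σ : Fin S) : Finset (Fin n) := {h | A.Γ h = σ ∧ A.idx h = A.q σ}

variable {A} {σ : Fin S} {h e : Fin n}

@[simp] lemma mem_fiber : h ∈ A.fiber σ ↔ A.Γ h = σ := by simp [fiber]

@[simp] lemma mem_blockEnds : e ∈ A.blockEnds σ ↔ A.Γ e = σ ∧ A.idx e = A.q σ := by
  simp [blockEnds]

lemma card_fiber (σ : Fin S) : #(A.fiber σ) = weight A.Γ σ := rfl

lemma fiber_nonempty (σ : Fin S) : (A.fiber σ).Nonempty :=
  let ⟨h, hh⟩ := A.surj σ; ⟨h, mem_fiber.2 hh⟩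

lemma Γ_add_and_idx_add (h : Fin n) {k : ℕ} (hk : A.idx h + k ≤ A.q (A.Γ h)) :
    A.Γ (h + k) = A.Γ h ∧ A.idx (h + k) = A.idx h + k := by
  induction k with
  | zero => simp
  | succ k ih =>
    obtain ⟨hΓ, hidx⟩ := ih (by omega)
    obtain ⟨hidx', hΓ'⟩ := A.idx_step (h + k) (by rw [hΓ, hidx]; omega)
    rw [Nat.cast_succ, ← add_assoc, hΓ', hΓ, hidx', hidx]
    exact ⟨rfl, rfl⟩

lemma Γ_sub_one_and_idx_sub_one (h2 : 2 ≤ A.idx h) :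
    A.Γ (h - 1) = A.Γ h ∧ A.idx (h - 1) + 1 = A.idx h := by
  rcases (A.idx_le (h - 1)).lt_or_eq with hlt | heq
  · obtain ⟨hidx, hΓ⟩ := A.idx_step (h - 1) hlt
    rw [sub_add_cancel] at hidx hΓ
    exact ⟨hΓ.symm, hidx.symm⟩
  · have := (A.idx_end (h - 1) heq).1
    rw [sub_add_cancel] at this
    omega

lemma Γ_sub_and_idx_sub (h : Fin n) {k : ℕ} (hk : k < A.idx h) :
    A.Γ (h - k) = A.Γ h ∧ A.idx (h - k) + k = A.idx h := by
  induction k with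
  | zero => simp
  | succ k ih =>
    obtain ⟨hΓ, hidx⟩ := ih (by omega)
    obtain ⟨hΓ', hidx'⟩ := Γ_sub_one_and_idx_sub_one (A := A) (h := h - k) (by omega)
    rw [Nat.cast_succ, ← sub_sub, hΓ', hΓ]
    exact ⟨rfl, by omega⟩

lemma add_one_of_mem_blockEnds (he : e ∈ A.blockEnds σ) :
    A.idx (e + 1) = 1 ∧ A.prev (A.Γ (e + 1)) = σ := by
  rw [mem_blockEnds] at he
  have hstart := (A.idx_end e (by rw [he.1, he.2])).1
  have := A.pred_block (e + 1) hstart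
  rw [add_sub_cancel_right, he.1] at this
  exact ⟨hstart, this.symm⟩

lemma sub_one_mem_blockEnds (h1 : A.idx h = 1) : h - 1 ∈ A.blockEnds (A.prev (A.Γ h)) := by
  have hΓ := A.pred_block h h1
  refine mem_blockEnds.2 ⟨hΓ, ?_⟩
  rcases (A.idx_le (h - 1)).lt_or_eq with hlt | heq
  · have := (A.idx_step (h - 1) hlt).1
    rw [sub_add_cancel] at this
    have := A.idx_one_le (h - 1)
    omega
  · rw [heq, hΓ]

lemma add_q_sub_idx_mem_blockEnds (hh : h ∈ A.fiber σ) :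
    h + ((A.q σ - A.idx h : ℕ) : Fin n) ∈ A.blockEnds σ := by
  rw [mem_fiber] at hh
  have hle : A.idx h ≤ A.q σ := hh ▸ A.idx_le h
  obtain ⟨hΓ, hidx⟩ := Γ_add_and_idx_add (A := A) h (k := A.q σ - A.idx h) (by rw [hh]; omega)
  rw [mem_blockEnds, hΓ, hidx, hh]
  exact ⟨rfl, by omega⟩

lemma blockEnds_nonempty (σ : Fin S) : (A.blockEnds σ).Nonempty :=
  let ⟨_, hh⟩ := fiber_nonempty (A := A) σ; ⟨_, add_q_sub_idx_mem_blockEnds hh⟩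

lemma prev_surjective : Function.Surjective A.prev := fun τ =>
  let ⟨_, he⟩ := blockEnds_nonempty (A := A) τ; ⟨_, (add_one_of_mem_blockEnds he).2⟩

lemma prev_injective : Function.Injective A.prev :=
  Finite.injective_iff_surjective.2 prev_surjective

lemma Γ_sub_and_idx_sub_of_mem_blockEnds (he : e ∈ A.blockEnds σ) {j : ℕ} (hj : j < A.q σ) :
    A.Γ (e - j) = σ ∧ A.idx (e - j) = A.q σ - j := by
  rw [mem_blockEnds] at he
  obtain ⟨hΓ, hidx⟩ := Γ_sub_and_idx_sub (A := A) e (k := j) (by omega)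
  exact ⟨hΓ.trans he.1, by omega⟩

lemma sub_q_mem_blockEnds_prev (he : e ∈ A.blockEnds σ) :
    e - (A.q σ : Fin n) ∈ A.blockEnds (A.prev σ) := by
  have hq := A.q_pos σ
  obtain ⟨hΓ, hidx⟩ := Γ_sub_and_idx_sub_of_mem_blockEnds he (j := A.q σ - 1) (by omega)
  have hstart := sub_one_mem_blockEnds (A := A) (h := e - (A.q σ - 1 : ℕ)) (by omega)
  rwa [sub_sub, ← Nat.cast_add_one, Nat.sub_add_cancel hq, hΓ] at hstart

lemma add_q_mem_blockEnds_of_prev (he : e ∈ A.blockEnds (A.prev σ)) :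
    e + (A.q σ : Fin n) ∈ A.blockEnds σ := by
  obtain ⟨hstart, hprev⟩ := add_one_of_mem_blockEnds he
  have hΓ := prev_injective hprev
  have hq := A.q_pos σ
  obtain ⟨hΓ', hidx⟩ :=
    Γ_add_and_idx_add (A := A) (e + 1) (k := A.q σ - 1) (by rw [hstart, hΓ]; omega)
  rw [add_assoc, add_comm 1, ← Nat.cast_add_one, Nat.sub_add_cancel hq] at hΓ' hidx
  rw [mem_blockEnds, hΓ', hidx, hΓ, hstart]
  exact ⟨rfl, by omega⟩

lemma expect_blockEnds_sub_q {M : Type*} [AddCommMonoid M] [Module ℚ≥0 M] (σ : Fin S)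
    (f : Fin n → M) :
    𝔼 e ∈ A.blockEnds σ, f (e - A.q σ) = 𝔼 e ∈ A.blockEnds (A.prev σ), f e :=
  expect_nbij' (fun e => e - A.q σ) (fun e => e + A.q σ) (fun _ => sub_q_mem_blockEnds_prev)
    (fun _ => add_q_mem_blockEnds_of_prev) (fun _ _ => sub_add_cancel _ _)
    (fun _ _ => add_sub_cancel_right _ _) fun _ _ => rfl

lemma expect_fiber {M : Type*} [AddCommMonoid M] [Module ℚ≥0 M] (σ : Fin S) (f : Fin n → M) :
    𝔼 h ∈ A.fiber σ, f h = 𝔼 e ∈ A.blockEnds σ, 𝔼 j ∈ range (A.q σ), f (e - j) := by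
  rw [← expect_product' (f := fun e (j : ℕ) => f (e - j))]
  refine expect_nbij' (fun h => (h + (A.q σ - A.idx h : ℕ), A.q σ - A.idx h))
    (fun p => p.1 - p.2) (fun h hh => ?_) (fun p hp => ?_) (fun h _ => add_sub_cancel_right _ _)
    (fun p hp => ?_) (fun h _ => by simp only [add_sub_cancel_right])
  · have hpos := A.idx_one_le h
    have hle : A.idx h ≤ A.q σ := mem_fiber.1 hh ▸ A.idx_le h
    exact mem_product.2 ⟨add_q_sub_idx_mem_blockEnds hh, mem_range.2 (by omega)⟩
  · obtain ⟨he, hj⟩ := mem_product.1 hp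
    exact mem_fiber.2 (Γ_sub_and_idx_sub_of_mem_blockEnds he (mem_range.1 hj)).1
  · obtain ⟨he, hj⟩ := mem_product.1 hp
    have hj := mem_range.1 hj
    have hidx := (Γ_sub_and_idx_sub_of_mem_blockEnds he hj).2
    rw [hidx, Nat.sub_sub_self hj.le, sub_add_cancel]

variable (A) in
noncomputable def avgPoint (p : CorePoint m n) : AggPoint m S where
  x g σ := 𝔼 h ∈ A.fiber σ, p.x g h
  z := p.z
  t := p.t
  u := p.u
  r σ := 𝔼 h ∈ A.fiber σ, p.r h
  s σ := 𝔼 e ∈ A.blockEnds σ, p.s e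

lemma avgPoint_s {p : CorePoint m n} (hs : ∀ h, p.s h = p.s (h - 1) + p.r h) (σ : Fin S) :
    (A.avgPoint p).s σ = (A.avgPoint p).s (A.prev σ) + A.q σ * (A.avgPoint p).r σ := by
  have htel : ∀ e, p.s e = p.s (e - A.q σ) + ∑ j ∈ range (A.q σ), p.r (e - j) := fun e => by
    rw [Fin.sum_range_eq_sub_of_forall_eq_add hs]; abel
  simp only [avgPoint]
  rw [expect_congr rfl fun e _ => htel e, expect_add_distrib, expect_blockEnds_sub_q,
    expect_fiber, mul_expect]
  congr 1
  refine expect_congr rfl fun e _ => ?_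
  rw [← card_mul_expect, card_range]

lemma avgPoint_feasible {p : CorePoint m n} (hp : CoreFeasible d a p) :
    AggFeasible A (A.avgPoint p) := by
  obtain ⟨hx, hz, ht, hu, hs, hdem, hcap, hsto, hr, hsu⟩ := hp
  refine ⟨fun g σ => expect_nonneg fun h _ => hx g h, hz, ht, hu,
    fun σ => expect_nonneg fun e _ => hs e, fun h => ?_, fun g h => ?_, avgPoint_s hsto,
    fun σ => ?_, fun σ => expect_le (blockEnds_nonempty σ) fun e _ => hsu e⟩
  · change ∑ g, 𝔼 h' ∈ A.fiber (A.Γ h), p.x g h' + 𝔼 h' ∈ A.fiber (A.Γ h), p.r h' = d h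
    rw [← expect_sum_comm, ← expect_add_distrib,
      expect_congr rfl fun h' hh' => (hdem h').trans (A.d_compat h' h (mem_fiber.1 hh'))]
    exact expect_const (fiber_nonempty _) _
  · exact expect_le (fiber_nonempty _) fun h' hh' =>
      A.a_compat g h' h (mem_fiber.1 hh') ▸ hcap g h'
  · exact (abs_expect_le _ _).trans (expect_le (fiber_nonempty σ) fun h _ => hr h)

variable (A) in
lemma aggObj_avgPoint (cx cz : Fin m → ℝ) (ct cu : ℝ) (p : CorePoint m n) :
    AggObj A.Γ cx cz ct cu (A.avgPoint p) = CoreObj cx cz ct cu p := by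
  have hx : ∀ g, ∑ σ, (weight A.Γ σ : ℝ) * cx g * (A.avgPoint p).x g σ = ∑ h, cx g * p.x g h :=
    fun g => by
      simp only [avgPoint, mul_comm _ (cx g), mul_assoc, ← card_fiber, card_mul_expect, ← mul_sum]
      exact congrArg _ (sum_fiberwise univ A.Γ _)
  simp only [AggObj, CoreObj, hx]
  rfl

lemma liftPoint_s_of_mem_blockEnds {pb : AggPoint m S}
    (hs : ∀ σ, pb.s σ = pb.s (A.prev σ) + A.q σ * pb.r σ) (he : e ∈ A.blockEnds σ) :
    (liftPoint A pb).s e = pb.s σ := by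
  rw [mem_blockEnds] at he
  simp only [liftPoint, he.1, he.2, hs σ]

lemma liftPoint_feasible {pb : AggPoint m S} (hpb : AggFeasible A pb) :
    CoreFeasible d a (liftPoint A pb) := by
  obtain ⟨hx, hz, ht, hu, hs, hdem, hcap, hsto, hr, hsu⟩ := hpb
  have hbounds : ∀ h, (liftPoint A pb).s h ∈ Set.Icc 0 pb.u := fun h => by
    have hend : pb.s (A.prev (A.Γ h)) + A.q (A.Γ h) * pb.r (A.Γ h) ∈ Set.Icc 0 pb.u :=
      hsto (A.Γ h) ▸ ⟨hs _, hsu _⟩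
    exact add_mul_mem_Icc_of_mem_Icc ⟨hs _, hsu _⟩ hend (Nat.cast_nonneg _)
      (Nat.cast_le.2 (A.idx_le h))
  refine ⟨fun g h => hx g _, hz, ht, hu, fun h => (hbounds h).1, hdem, hcap, fun h => ?_,
    fun h => hr _, fun h => (hbounds h).2⟩
  rcases (A.idx_one_le h).eq_or_lt with h1 | h2
  · rw [liftPoint_s_of_mem_blockEnds hsto (sub_one_mem_blockEnds h1.symm)]
    simp only [liftPoint, ← h1, Nat.cast_one, one_mul]
  · obtain ⟨hΓ, hidx⟩ := Γ_sub_one_and_idx_sub_one h2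
    simp only [liftPoint, hΓ, ← hidx]
    push_cast
    ring

variable (A) in
lemma coreObj_liftPoint (cx cz : Fin m → ℝ) (ct cu : ℝ) (pb : AggPoint m S) :
    CoreObj cx cz ct cu (liftPoint A pb) = AggObj A.Γ cx cz ct cu pb := by
  have hx : ∀ g, ∑ h, cx g * pb.x g (A.Γ h) = ∑ σ, (weight A.Γ σ : ℝ) * cx g * pb.x g σ :=
    fun g => by
      simp only [← nsmul_eq_mul, smul_mul_assoc]
      exact (sum_weight_smul A.Γ fun σ => cx g * pb.x g σ).symm
  simp only [CoreObj, AggObj, liftPoint, hx]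

end AdmissibleAgg

open AdmissibleAgg

theorem aggregation_lossless
    {m n S : ℕ} [NeZero n]
    (cx cz : Fin m → ℝ) (ct cu : ℝ)
    (d : Fin n → ℝ) (a : Fin m → Fin n → ℝ)
    (A : AdmissibleAgg m n S d a)
    (hmin : ∃ p : CorePoint m n, CoreFeasible d a p ∧
      ∀ p' : CorePoint m n, CoreFeasible d a p' →
        CoreObj cx cz ct cu p ≤ CoreObj cx cz ct cu p') :
    -- the aggregated model attains its minimum
    (∃ pb : AggPoint m S, AggFeasible A pb ∧
      ∀ pb' : AggPoint m S, AggFeasible A pb' →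
        AggObj A.Γ cx cz ct cu pb ≤ AggObj A.Γ cx cz ct cu pb') ∧
    -- the optimal values of the two problems are equal
    (∀ p : CorePoint m n, ∀ pb : AggPoint m S,
      CoreFeasible d a p →
      (∀ p' : CorePoint m n, CoreFeasible d a p' →
        CoreObj cx cz ct cu p ≤ CoreObj cx cz ct cu p') →
      AggFeasible A pb →
      (∀ pb' : AggPoint m S, AggFeasible A pb' →
        AggObj A.Γ cx cz ct cu pb ≤ AggObj A.Γ cx cz ct cu pb') →
      CoreObj cx cz ct cu p = AggObj A.Γ cx cz ct cu pb) ∧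
    -- lifting an optimal solution of the aggregated model yields an optimal
    -- solution of the core model
    (∀ pb : AggPoint m S, AggFeasible A pb →
      (∀ pb' : AggPoint m S, AggFeasible A pb' →
        AggObj A.Γ cx cz ct cu pb ≤ AggObj A.Γ cx cz ct cu pb') →
      CoreFeasible d a (liftPoint A pb) ∧
      (∀ p' : CorePoint m n, CoreFeasible d a p' →
        CoreObj cx cz ct cu (liftPoint A pb) ≤ CoreObj cx cz ct cu p')) := by
  obtain ⟨p₀, hp₀, hp₀_min⟩ := hmin
  refine ⟨⟨A.avgPoint p₀, avgPoint_feasible hp₀, fun pb' hpb' => ?_⟩,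
    fun p pb hp hp_min hpb hpb_min => le_antisymm ?_ ?_,
    fun pb hpb hpb_min => ⟨liftPoint_feasible hpb, fun p' hp' => ?_⟩⟩
  · rw [A.aggObj_avgPoint, ← A.coreObj_liftPoint]
    exact hp₀_min _ (liftPoint_feasible hpb')
  · rw [← A.coreObj_liftPoint]
    exact hp_min _ (liftPoint_feasible hpb)
  · rw [← A.aggObj_avgPoint]
    exact hpb_min _ (avgPoint_feasible hp)
  · rw [A.coreObj_liftPoint, ← A.aggObj_avgPoint]
    exact hpb_min _ (avgPoint_feasible hp')
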